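/- There is a short exact sequence of ℤ[G]-modules 0 → ℤ[G/I]/(g) → ℤ[G]/(g̃) → ℤ[G]/(g̃, ν_I) → 0, in which the first map sends the class of the image in ℤ[G/I] of an element x ∈ ℤ[G] to the class of ν_I·x (this map is well defined and injective), and the second map is the natural projection. -/

import Mathlib

open MonoidAlgebra

/-- The projection `ℤ[G] → ℤ[G/I]`. -/
noncomputable def toQuot {G : Type} [CommGroup G] (I : Subgroup G) :
    MonoidAlgebra ℤ G →+* MonoidAlgebra ℤ (G ⧸ I) :=
  MonoidAlgebra.mapDomainRingHom ℤ (QuotientGroup.mk' I)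

/-- The ideal `𝓘_I = ker(ℤ[G] → ℤ[G/I])`. -/
noncomputable def kerIdeal {G : Type} [CommGroup G] (I : Subgroup G) :
    Ideal (MonoidAlgebra ℤ G) :=
  RingHom.ker (toQuot I)

/-- The element `g̃ = 1 − φ̃⁻¹ + #I ∈ ℤ[G]`. -/
noncomputable def gtilde {G : Type} [CommGroup G] (I : Subgroup G) (φt : G) :
    MonoidAlgebra ℤ G :=
  1 - MonoidAlgebra.of ℤ G φt⁻¹ + (Nat.card I : MonoidAlgebra ℤ G)

/-- The sum `ν_H = Σ_{σ ∈ H} σ` of the elements of a subgroup `H` in the group algebra. -/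
noncomputable def nuElt (R : Type) [CommRing R] {G : Type} [CommGroup G] [Fintype G]
    (H : Subgroup G) : MonoidAlgebra R G :=
  letI := Classical.decPred (· ∈ H)
  ∑ σ ∈ Finset.univ.filter (· ∈ H), MonoidAlgebra.of R G σ


/-!
Multiplication by `ν_I` kills the kernel of `π : ℤ[G] → ℤ[G/I]`, because the coefficient of
`ν_I * x` at `σ` is the coefficient of `π x` at `σI`; so `x ↦ ν_I * x` induces the first map,
and exactness in the middle and on the right is immediate.

For injectivity suppose `ν_I * x = y * g̃`. As `ν_I² = #I • ν_I`, we get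
`g̃ * (ν_I * y - #I • y) = 0`, and `g̃` is a non-zero-divisor: if `g̃ * a = 0` then `φ̃⁻¹` acts
on `a` as multiplication by `#I + 1`, so `a = (#I + 1) ^ ord(φ̃) • a`, which forces `a = 0` in
the torsion-free `ℤ[G]`. Hence `ν_I * y = #I • y`, so every coefficient of `π y` is divisible
by `#I`, say `π y = #I • w`, and cancelling `#I` in `#I • π x = π (ν_I * x) = #I • (w * g)`
gives `π x = w * g`.
-/

instance {R M : Type*} [Semiring R] [IsAddTorsionFree R] : IsAddTorsionFree (MonoidAlgebra R M) :=
  coeff_injective.isAddTorsionFree (coeffAddEquiv : MonoidAlgebra R M ≃+ _).toAddMonoidHom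

theorem eq_zero_of_mul_eq_nsmul_of_pow_eq_one {A : Type*} [Ring A] [IsAddTorsionFree A]
    {u a : A} {k m : ℕ} (hu : u ^ k = 1) (hk : k ≠ 0) (hm : 2 ≤ m) (h : u * a = m • a) :
    a = 0 := by
  have hpow : ∀ j : ℕ, u ^ j * a = m ^ j • a := by
    intro j
    induction j with
    | zero => simp
    | succ j ih => rw [pow_succ', mul_assoc, ih, mul_smul_comm, h, smul_smul, ← pow_succ]
  have hfix : (m ^ k - 1) • a + a = 0 + a := by
    rw [← succ_nsmul, Nat.sub_add_cancel (Nat.one_le_pow _ _ (by omega)), ← hpow, hu, one_mul,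
      zero_add]
  have hmk : m ^ k - 1 ≠ 0 := by
    have : 2 ≤ m ^ k := (Nat.le_self_pow hk m).trans' hm
    omega
  exact nsmul_right_injective hmk (by simpa using add_right_cancel hfix)

theorem LinearMap.exists_comp_eq_of_surjective {R M N P : Type*} [Ring R] [AddCommGroup M]
    [AddCommGroup N] [AddCommGroup P] [Module R M] [Module R N] [Module R P] (ψ : M →ₗ[R] N)
    (hψ : Function.Surjective ψ) (φ : M →ₗ[R] P) (h : LinearMap.ker ψ ≤ LinearMap.ker φ) :
    ∃ f : N →ₗ[R] P, f ∘ₗ ψ = φ :=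
  ⟨(LinearMap.ker ψ).liftQ φ h ∘ₗ (ψ.quotKerEquivOfSurjective hψ).symm.toLinearMap, by
    ext x; simp [LinearMap.quotKerEquivOfSurjective_symm_apply]⟩

noncomputable def Ideal.Quotient.mkComp {A B : Type*} [CommRing A] [CommRing B] (π : A →+* B)
    (J : Ideal B) :
    letI := Module.compHom (B ⧸ J) π
    A →ₗ[A] B ⧸ J :=
  letI := Module.compHom (B ⧸ J) π
  { toFun := fun a => Ideal.Quotient.mk J (π a)
    map_add' := by simp
    map_smul' := fun r a => by
      show Ideal.Quotient.mk J (π (r * a)) = Ideal.Quotient.mk J (π r) * Ideal.Quotient.mk J (π a)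
      rw [map_mul, map_mul] }

theorem Ideal.Quotient.mkComp_surjective {A B : Type*} [CommRing A] [CommRing B] {π : A →+* B}
    (hπ : Function.Surjective π) (J : Ideal B) : Function.Surjective (Ideal.Quotient.mkComp π J) :=
  Ideal.Quotient.mk_surjective.comp hπ

section GroupRing

variable {G : Type} [CommGroup G] (I : Subgroup G)

theorem toQuot_single (σ : G) (r : ℤ) : toQuot I (single σ r) = single (σ : G ⧸ I) r := by
  simp [toQuot, mapDomainRingHom, mapDomain_single]

theorem toQuot_surjective : Function.Surjective (toQuot I) := by
  intro x
  induction x using MonoidAlgebra.induction_linear with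
  | zero => exact ⟨0, map_zero _⟩
  | add x y hx hy =>
    obtain ⟨x, rfl⟩ := hx
    obtain ⟨y, rfl⟩ := hy
    exact ⟨x + y, map_add _ _ _⟩
  | single C r => exact ⟨single C.out r, by rw [toQuot_single, QuotientGroup.out_eq']⟩

theorem eq_zero_of_gtilde_mul_eq_zero [Finite G] (φt : G) {a : MonoidAlgebra ℤ G}
    (h : gtilde I φt * a = 0) : a = 0 := by
  refine eq_zero_of_mul_eq_nsmul_of_pow_eq_one (u := of ℤ G φt⁻¹) (k := orderOf φt⁻¹)
    (m := Nat.card I + 1) ?_ (orderOf_pos _).ne' ?_ ?_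
  · rw [← map_pow, pow_orderOf_eq_one, map_one]
  · have := Nat.card_pos (α := I)
    omega
  · rw [add_nsmul, one_nsmul, nsmul_eq_mul]
    unfold gtilde at h
    linear_combination -h

variable [Fintype G]

open Classical in
theorem coeff_nuElt (σ : G) : (nuElt ℤ I).coeff σ = if σ ∈ I then 1 else 0 := by
  simp [nuElt, coeff_sum, Finsupp.finsetSum_apply, of_apply, Finsupp.single_apply]

theorem coeff_nuElt_mul (x : MonoidAlgebra ℤ G) (σ : G) :
    (nuElt ℤ I * x).coeff σ = (toQuot I x).coeff (σ : G ⧸ I) := by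
  classical
  induction x using MonoidAlgebra.induction_linear with
  | zero => simp
  | add x y hx hy => simp [mul_add, hx, hy]
  | single τ r =>
    rw [coeff_mul_single_apply, coeff_nuElt, toQuot_single, coeff_single, Finsupp.single_apply]
    simp only [QuotientGroup.eq, mul_comm τ⁻¹ σ, ite_mul, one_mul, zero_mul]

theorem nuElt_mul_eq_zero {x : MonoidAlgebra ℤ G} (hx : toQuot I x = 0) : nuElt ℤ I * x = 0 := by
  ext σ
  rw [coeff_nuElt_mul, hx]
  rfl

theorem nuElt_mul_of_mem {i : G} (hi : i ∈ I) : nuElt ℤ I * of ℤ G i = nuElt ℤ I := by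
  classical
  ext σ
  rw [of_apply, coeff_mul_single_apply, coeff_nuElt, coeff_nuElt, mul_one]
  exact if_congr (mul_mem_cancel_right (I.inv_mem hi)) rfl rfl

theorem card_filter_mem :
    letI := Classical.decPred (· ∈ I)
    (Finset.univ.filter (· ∈ I)).card = Nat.card I := by
  classical
  rw [Nat.card_eq_fintype_card, Fintype.card_subtype]

theorem nuElt_mul_self : nuElt ℤ I * nuElt ℤ I = Nat.card I • nuElt ℤ I := by
  classical
  conv_lhs => enter [2]; rw [nuElt]
  rw [Finset.mul_sum, Finset.sum_congr rfl fun σ hσ => nuElt_mul_of_mem I (by simpa using hσ),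
    Finset.sum_const, card_filter_mem]

theorem toQuot_nuElt : toQuot I (nuElt ℤ I) = Nat.card I := by
  classical
  have hone : ∀ σ ∈ Finset.univ.filter (· ∈ I), toQuot I (of ℤ G σ) = 1 := fun σ hσ => by
    rw [of_apply, toQuot_single, (QuotientGroup.eq_one_iff σ).2 (by simpa using hσ)]
    rfl
  rw [nuElt, map_sum, Finset.sum_congr rfl hone, Finset.sum_const, card_filter_mem, nsmul_one]

theorem exists_toQuot_eq_card_nsmul {y : MonoidAlgebra ℤ G}
    (h : nuElt ℤ I * y = Nat.card I • y) : ∃ w, toQuot I y = Nat.card I • w := by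
  refine ⟨ofCoeff (Finsupp.equivFunOnFinite.symm fun C => y.coeff C.out), ?_⟩
  ext C
  conv_lhs => rw [← QuotientGroup.out_eq' C]
  rw [← coeff_nuElt_mul, h]
  rfl

theorem nuElt_mul_mem_span_gtilde_iff (φt : G) (x : MonoidAlgebra ℤ G) :
    nuElt ℤ I * x ∈ Ideal.span {gtilde I φt} ↔
      toQuot I x ∈ Ideal.span {toQuot I (gtilde I φt)} := by
  constructor
  · intro hx
    obtain ⟨y, hy⟩ := Ideal.mem_span_singleton'.mp hx
    have hνy : nuElt ℤ I * y = Nat.card I • y := by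
      refine sub_eq_zero.mp (eq_zero_of_gtilde_mul_eq_zero I φt ?_)
      have hνν := nuElt_mul_self I
      rw [nsmul_eq_mul] at hνν ⊢
      linear_combination (nuElt ℤ I - Nat.card I) * hy + x * hνν
    obtain ⟨w, hw⟩ := exists_toQuot_eq_card_nsmul I hνy
    have hcard : Nat.card I • toQuot I x = Nat.card I • (w * toQuot I (gtilde I φt)) :=
      calc Nat.card I • toQuot I x = toQuot I (nuElt ℤ I * x) := by
            rw [map_mul, toQuot_nuElt, nsmul_eq_mul]
        _ = toQuot I y * toQuot I (gtilde I φt) := by rw [← hy, map_mul]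
        _ = Nat.card I • (w * toQuot I (gtilde I φt)) := by rw [hw, smul_mul_assoc]
    exact Ideal.mem_span_singleton'.mpr
      ⟨w, (nsmul_right_injective Nat.card_pos.ne' hcard).symm⟩
  · intro hx
    obtain ⟨w, hw⟩ := Ideal.mem_span_singleton'.mp hx
    obtain ⟨z, rfl⟩ := toQuot_surjective I w
    have hν : nuElt ℤ I * (x - z * gtilde I φt) = 0 :=
      nuElt_mul_eq_zero I (by rw [map_sub, map_mul, hw, sub_self])
    exact Ideal.mem_span_singleton'.mpr ⟨nuElt ℤ I * z, by linear_combination -hν⟩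

end GroupRing

section ShortExactSequence

variable {G : Type} [CommGroup G] [Fintype G] (I : Subgroup G) (φt : G)

theorem injective_of_map_mk_toQuot
    (f : MonoidAlgebra ℤ (G ⧸ I) ⧸ Ideal.span {toQuot I (gtilde I φt)} →
      MonoidAlgebra ℤ G ⧸ Ideal.span {gtilde I φt})
    (hf : ∀ x, f (Ideal.Quotient.mk _ (toQuot I x)) = Ideal.Quotient.mk _ (nuElt ℤ I * x)) :
    Function.Injective f := by
  intro a b hab
  obtain ⟨x, rfl⟩ := (Ideal.Quotient.mk_surjective.comp (toQuot_surjective I)) a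
  obtain ⟨y, rfl⟩ := (Ideal.Quotient.mk_surjective.comp (toQuot_surjective I)) b
  rw [Function.comp_apply, Function.comp_apply, hf, hf, Ideal.Quotient.eq, ← mul_sub,
    nuElt_mul_mem_span_gtilde_iff, map_sub] at hab
  exact Ideal.Quotient.eq.mpr hab

theorem exact_of_map_mk_toQuot
    (f : MonoidAlgebra ℤ (G ⧸ I) ⧸ Ideal.span {toQuot I (gtilde I φt)} →
      MonoidAlgebra ℤ G ⧸ Ideal.span {gtilde I φt})
    (hf : ∀ x, f (Ideal.Quotient.mk _ (toQuot I x)) = Ideal.Quotient.mk _ (nuElt ℤ I * x))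
    (g : MonoidAlgebra ℤ G ⧸ Ideal.span {gtilde I φt} →
      MonoidAlgebra ℤ G ⧸ Ideal.span {gtilde I φt, nuElt ℤ I})
    (hg : ∀ x, g (Ideal.Quotient.mk _ x) = Ideal.Quotient.mk _ x) :
    Function.Exact f g := by
  intro m
  obtain ⟨x, rfl⟩ := Ideal.Quotient.mk_surjective m
  rw [hg, Ideal.Quotient.eq_zero_iff_mem, Ideal.mem_span_pair]
  constructor
  · rintro ⟨a, b, hab⟩
    refine ⟨Ideal.Quotient.mk _ (toQuot I b), ?_⟩
    rw [hf, Ideal.Quotient.eq]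
    exact Ideal.mem_span_singleton'.mpr ⟨-a, by linear_combination -hab⟩
  · rintro ⟨m', hm'⟩
    obtain ⟨b, rfl⟩ := (Ideal.Quotient.mk_surjective.comp (toQuot_surjective I)) m'
    rw [Function.comp_apply, hf, Ideal.Quotient.eq] at hm'
    obtain ⟨a, ha⟩ := Ideal.mem_span_singleton'.mp hm'
    exact ⟨-a, b, by linear_combination -ha⟩

end ShortExactSequence

theorem statement8_general {G : Type} [CommGroup G] [Fintype G] (I : Subgroup G) (φt : G) :
    letI : Module (MonoidAlgebra ℤ G)
        (MonoidAlgebra ℤ (G ⧸ I) ⧸ Ideal.span {toQuot I (gtilde I φt)}) :=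
      Module.compHom _ (toQuot I)
    ∃ (f₁ : (MonoidAlgebra ℤ (G ⧸ I) ⧸ Ideal.span {toQuot I (gtilde I φt)})
        →ₗ[MonoidAlgebra ℤ G] (MonoidAlgebra ℤ G ⧸ Ideal.span {gtilde I φt}))
      (f₂ : (MonoidAlgebra ℤ G ⧸ Ideal.span {gtilde I φt}) →+*
        (MonoidAlgebra ℤ G ⧸ Ideal.span {gtilde I φt, nuElt ℤ I})),
      (∀ x : MonoidAlgebra ℤ G,
        f₁ (Ideal.Quotient.mk (Ideal.span {toQuot I (gtilde I φt)}) (toQuot I x))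
          = Ideal.Quotient.mk (Ideal.span {gtilde I φt}) (nuElt ℤ I * x)) ∧
      (∀ x : MonoidAlgebra ℤ G,
        f₂ (Ideal.Quotient.mk (Ideal.span {gtilde I φt}) x)
          = Ideal.Quotient.mk (Ideal.span {gtilde I φt, nuElt ℤ I}) x) ∧
      Function.Injective f₁ ∧ Function.Exact f₁ f₂ ∧ Function.Surjective f₂ := by
  let : Module (MonoidAlgebra ℤ G)
      (MonoidAlgebra ℤ (G ⧸ I) ⧸ Ideal.span {toQuot I (gtilde I φt)}) :=
    Module.compHom _ (toQuot I)
  obtain ⟨f₁, hf₁⟩ := LinearMap.exists_comp_eq_of_surjective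
    (Ideal.Quotient.mkComp (toQuot I) _) (Ideal.Quotient.mkComp_surjective (toQuot_surjective I) _)
    ((Ideal.span {gtilde I φt}).mkQ ∘ₗ LinearMap.mulLeft _ (nuElt ℤ I))
    fun x hx => Ideal.Quotient.eq_zero_iff_mem.mpr <|
      (nuElt_mul_mem_span_gtilde_iff I φt x).mpr (Ideal.Quotient.eq_zero_iff_mem.mp hx)
  have hf₁_mk : ∀ x, f₁ (Ideal.Quotient.mk _ (toQuot I x)) =
      Ideal.Quotient.mk _ (nuElt ℤ I * x) := LinearMap.congr_fun hf₁
  have hle : Ideal.span {gtilde I φt} ≤ Ideal.span {gtilde I φt, nuElt ℤ I} :=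
    Ideal.span_mono (Set.singleton_subset_iff.mpr (Set.mem_insert _ _))
  exact ⟨f₁, Ideal.Quotient.factor hle, hf₁_mk, Ideal.Quotient.factor_mk hle,
    injective_of_map_mk_toQuot I φt f₁ hf₁_mk,
    exact_of_map_mk_toQuot I φt f₁ hf₁_mk _ (Ideal.Quotient.factor_mk hle),
    Ideal.Quotient.factor_surjective hle⟩

/-- there is a short exact sequence of `ℤ[G]`-modules
`0 → ℤ[G/I]/(g) → ℤ[G]/(g̃) → ℤ[G]/(g̃, ν_I) → 0`, the first map sending the class of
`π(x)` (`x ∈ ℤ[G]`, `π : ℤ[G] → ℤ[G/I]` the projection, `g = π(g̃)`) to the class of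
`ν_I·x` (in particular this map is well defined and injective), and the second map being
the natural projection. Here `ℤ[G/I]/(g)` is a `ℤ[G]`-module via `π`. -/
theorem statement8 {G : Type} [CommGroup G] [Fintype G] (I D : Subgroup G) (hID : I ≤ D)
    (φt : G) (hφt : φt ∈ D) (hφgen : ∀ d ∈ D, ∃ n : ℤ, φt ^ n * d⁻¹ ∈ I) :
    letI : Module (MonoidAlgebra ℤ G)
        (MonoidAlgebra ℤ (G ⧸ I) ⧸ Ideal.span {toQuot I (gtilde I φt)}) :=
      Module.compHom _ (toQuot I)
    ∃ (f₁ : (MonoidAlgebra ℤ (G ⧸ I) ⧸ Ideal.span {toQuot I (gtilde I φt)})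
        →ₗ[MonoidAlgebra ℤ G] (MonoidAlgebra ℤ G ⧸ Ideal.span {gtilde I φt}))
      (f₂ : (MonoidAlgebra ℤ G ⧸ Ideal.span {gtilde I φt}) →+*
        (MonoidAlgebra ℤ G ⧸ Ideal.span {gtilde I φt, nuElt ℤ I})),
      (∀ x : MonoidAlgebra ℤ G,
        f₁ (Ideal.Quotient.mk (Ideal.span {toQuot I (gtilde I φt)}) (toQuot I x))
          = Ideal.Quotient.mk (Ideal.span {gtilde I φt}) (nuElt ℤ I * x)) ∧
      (∀ x : MonoidAlgebra ℤ G,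
        f₂ (Ideal.Quotient.mk (Ideal.span {gtilde I φt}) x)
          = Ideal.Quotient.mk (Ideal.span {gtilde I φt, nuElt ℤ I}) x) ∧
      Function.Injective f₁ ∧ Function.Exact f₁ f₂ ∧ Function.Surjective f₂ :=
  statement8_general I φt
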